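/- Define u(t,V,β) = −exp(−γ(e^{r(T−t)}V + a(t) + (1/2)(β−r·1⃗)ᵀB(t)(β−r·1⃗))) where a(t) = (1/(2γ))∫_t^T Tr(Σ⁻¹(Γ_s − Γ_T)) ds and B(t) = (1/γ)(Γ_t⁻¹ − Γ_t⁻¹Γ_TΓ_t⁻¹). Then u satisfies, on [0,T]×ℝ×ℝ^d, the HJB equation −∂_t u − (1/2)Tr(Γ_tΣ⁻¹Γ_t ∂²_{ββ}u) − sup_{M∈ℝ^d}{(Mᵀ(β−r·1⃗) + rV)∂_V u + (1/2)MᵀΣM ∂²_{VV}u + MᵀΓ_t ∂²_{Vβ}u} = 0 with terminal condition u(T,V,β) = −exp(−γV), and the supremum is attained at M* = e^{−r(T−t)}(1/γ)Σ⁻¹Γ_TΓ_t⁻¹(β−r·1⃗). -/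

import Mathlib

/-!
For fixed `t`, `u` is minus the exponential of a function affine in `V` and quadratic in
`q = β - r·1⃗`, so all its spatial derivatives are explicit multiples of `K = -u`, and the
Hamiltonian is a concave quadratic function of `M`, maximised at `M*` with value
`γ e^{r(T-t)} K rV + ½ K wᵀΣ⁻¹w`, where `w = Γ_T Γ_t⁻¹ q`. The filtering identity
`γ Γ_t B_t = 1 - Γ_T Γ_t⁻¹` turns the Hessian term into
`Tr(Σ⁻¹(Γ_t - Γ_T)) - (q - w)ᵀΣ⁻¹(q - w)`, and `∂_t u` is computed from `∂_t Γ_t⁻¹ = Σ⁻¹` and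
the fundamental theorem of calculus for `a`; everything cancels. At `t = T` both `a` and `B`
vanish.
-/

noncomputable section

open Set Matrix

/-- ∂ₜ for a function u(t,V,β). -/
def umt {d : ℕ} (u : ℝ → ℝ → (Fin d → ℝ) → ℝ) (t V : ℝ) (β : Fin d → ℝ) : ℝ :=
  deriv (fun s => u s V β) t
/-- ∂_V for a function u(t,V,β). -/
def umV {d : ℕ} (u : ℝ → ℝ → (Fin d → ℝ) → ℝ) (t V : ℝ) (β : Fin d → ℝ) : ℝ :=
  deriv (fun x => u t x β) V
/-- ∂²_{VV} for a function u(t,V,β). -/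
def umVV {d : ℕ} (u : ℝ → ℝ → (Fin d → ℝ) → ℝ) (t V : ℝ) (β : Fin d → ℝ) : ℝ :=
  deriv (fun x => umV u t x β) V
/-- Gradient in β of a function u(t,V,β). -/
def umgrad {d : ℕ} (u : ℝ → ℝ → (Fin d → ℝ) → ℝ) (t V : ℝ) (β : Fin d → ℝ) : Fin d → ℝ :=
  fun i => deriv (fun y => u t V (Function.update β i y)) (β i)
/-- Hessian in β of a function u(t,V,β). -/
def umhess {d : ℕ} (u : ℝ → ℝ → (Fin d → ℝ) → ℝ) (t V : ℝ) (β : Fin d → ℝ) :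
    Matrix (Fin d) (Fin d) ℝ :=
  Matrix.of fun i j => deriv (fun y => umgrad u t V (Function.update β j y) i) (β j)
/-- Mixed derivative ∂²_{Vβ} (an ℝ^d-valued quantity) of u(t,V,β). -/
def umVb {d : ℕ} (u : ℝ → ℝ → (Fin d → ℝ) → ℝ) (t V : ℝ) (β : Fin d → ℝ) : Fin d → ℝ :=
  fun i => deriv (fun y => umV u t V (Function.update β i y)) (β i)

/-- The vector β − r·1⃗. -/
def rsub {d : ℕ} (r : ℝ) (β : Fin d → ℝ) : Fin d → ℝ := fun i => β i - r

/-- The quantity inside the supremum of the multi-asset CARA HJB equation. -/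
def hamMd {d : ℕ} (Sm Gt : Matrix (Fin d) (Fin d) ℝ) (r : ℝ)
    (u : ℝ → ℝ → (Fin d → ℝ) → ℝ) (t V : ℝ) (β : Fin d → ℝ) (M : Fin d → ℝ) : ℝ :=
  (M ⬝ᵥ rsub r β + r * V) * umV u t V β
    + (1/2) * (M ⬝ᵥ Sm.mulVec M) * umVV u t V β
    + M ⬝ᵥ Gt.mulVec (umVb u t V β)


open scoped Topology

lemma Matrix.IsHermitian.dotProduct_mulVec_comm {n : Type*} [Fintype n] {A : Matrix n n ℝ}
    (hA : A.IsHermitian) (v w : n → ℝ) : v ⬝ᵥ A *ᵥ w = w ⬝ᵥ A *ᵥ v := by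
  have hAT : Aᵀ = A := (conjTranspose_eq_transpose_of_trivial A).symm.trans hA.eq
  conv_lhs => rw [← hAT, mulVec_transpose, dotProduct_comm, ← dotProduct_mulVec]

lemma Matrix.nonsing_inv_mul_self_mul_nonsing_inv {n R : Type*} [Fintype n] [DecidableEq n]
    [CommRing R] (A : Matrix n n R) : A⁻¹ * A * A⁻¹ = A⁻¹ := by
  by_cases hA : IsUnit A.det
  · rw [nonsing_inv_mul _ hA, Matrix.one_mul]
  · simp [nonsing_inv_apply_not_isUnit _ hA]

lemma Matrix.IsHermitian.sub_dotProduct_mulVec_sub {n : Type*} [Fintype n] {A : Matrix n n ℝ}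
    (hA : A.IsHermitian) (v w : n → ℝ) :
    (v - w) ⬝ᵥ A *ᵥ (v - w) = v ⬝ᵥ A *ᵥ v - 2 * (A *ᵥ v ⬝ᵥ w) + w ⬝ᵥ A *ᵥ w := by
  rw [mulVec_sub, dotProduct_sub, sub_dotProduct, sub_dotProduct, dotProduct_comm (A *ᵥ v),
    hA.dotProduct_mulVec_comm w v]
  ring

section VectorDerivatives

variable {ι : Type*} [Fintype ι] {f g : ℝ → ι → ℝ} {f' g' : ι → ℝ} {t : ℝ}

lemma HasDerivAt.dotProduct (hf : HasDerivAt f f' t) (hg : HasDerivAt g g' t) :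
    HasDerivAt (fun s => f s ⬝ᵥ g s) (f' ⬝ᵥ g t + f t ⬝ᵥ g') t := by
  have h : HasDerivAt (fun s => ∑ i, f s i * g s i) (∑ i, (f' i * g t i + f t i * g' i)) t :=
    HasDerivAt.fun_sum fun i _ => (hasDerivAt_pi.1 hf i).fun_mul (hasDerivAt_pi.1 hg i)
  rw [Finset.sum_add_distrib] at h
  exact h

lemma HasDerivAt.mulVec {κ : Type*} (A : Matrix κ ι ℝ) (hf : HasDerivAt f f' t) :
    HasDerivAt (fun s => A *ᵥ f s) (A *ᵥ f') t :=
  hasDerivAt_pi.2 fun i => by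
    have h : HasDerivAt (fun s => A i ⬝ᵥ f s) (A i ⬝ᵥ f') t := by
      simpa using (hasDerivAt_const t (A i)).dotProduct hf
    exact h

lemma HasDerivAt.dotProduct_mulVec_self {A : Matrix ι ι ℝ} (hA : A.IsHermitian)
    (hf : HasDerivAt f f' t) :
    HasDerivAt (fun s => f s ⬝ᵥ A *ᵥ f s) (2 * (f' ⬝ᵥ A *ᵥ f t)) t := by
  convert hf.dotProduct (hf.mulVec A) using 1
  rw [hA.dotProduct_mulVec_comm (f t)]
  ring

end VectorDerivatives

lemma Matrix.PosDef.dotProduct_sub_half_quadratic_le {n : Type*} [Fintype n] [DecidableEq n]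
    {S : Matrix n n ℝ} (hS : S.PosDef) (w M : n → ℝ) {c : ℝ} (hc : 0 < c) :
    M ⬝ᵥ w - c / 2 * (M ⬝ᵥ S *ᵥ M)
      ≤ (c⁻¹ • S⁻¹ *ᵥ w) ⬝ᵥ w - c / 2 * ((c⁻¹ • S⁻¹ *ᵥ w) ⬝ᵥ S *ᵥ (c⁻¹ • S⁻¹ *ᵥ w)) := by
  set M₀ := c⁻¹ • S⁻¹ *ᵥ w
  have hSM₀ : S *ᵥ M₀ = c⁻¹ • w := by
    rw [mulVec_smul, mulVec_mulVec, mul_nonsing_inv _ (isUnit_iff_ne_zero.2 hS.det_pos.ne'),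
      one_mulVec]
  have hgap : 0 ≤ (M - M₀) ⬝ᵥ S *ᵥ (M - M₀) := by
    simpa using hS.posSemidef.dotProduct_mulVec_nonneg (M - M₀)
  have hsymm : M₀ ⬝ᵥ S *ᵥ M = M ⬝ᵥ S *ᵥ M₀ := hS.isHermitian.dotProduct_mulVec_comm _ _
  rw [mulVec_sub, dotProduct_sub, sub_dotProduct, sub_dotProduct, hsymm, hSM₀] at hgap
  rw [hSM₀]
  simp only [dotProduct_smul, smul_eq_mul] at hgap ⊢
  have key : M₀ ⬝ᵥ w - c / 2 * (c⁻¹ * M₀ ⬝ᵥ w) - (M ⬝ᵥ w - c / 2 * M ⬝ᵥ S *ᵥ M)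
      = c / 2 * (M ⬝ᵥ S *ᵥ M - c⁻¹ * M ⬝ᵥ w - (c⁻¹ * M ⬝ᵥ w - c⁻¹ * M₀ ⬝ᵥ w)) := by
    field_simp
    ring
  linarith [mul_nonneg (half_pos hc).le hgap]

lemma Matrix.dotProduct_sub_half_quadratic_eq {n : Type*} [Fintype n] [DecidableEq n]
    {S : Matrix n n ℝ} (hS : IsUnit S.det) (w : n → ℝ) {c : ℝ} (hc : c ≠ 0) :
    (c⁻¹ • S⁻¹ *ᵥ w) ⬝ᵥ w - c / 2 * ((c⁻¹ • S⁻¹ *ᵥ w) ⬝ᵥ S *ᵥ (c⁻¹ • S⁻¹ *ᵥ w))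
      = 1 / (2 * c) * (w ⬝ᵥ S⁻¹ *ᵥ w) := by
  rw [mulVec_smul, mulVec_mulVec, mul_nonsing_inv _ hS, one_mulVec, dotProduct_smul,
    smul_dotProduct, smul_eq_mul, smul_eq_mul, dotProduct_comm (S⁻¹ *ᵥ w)]
  field_simp
  ring

section QuadCoeff

variable {n : Type*} [Fintype n] [DecidableEq n] {γ : ℝ} {A G : Matrix n n ℝ}

-- The paper's `B(t)` is `quadCoeff γ Γ_t Γ_T`.
def quadCoeff (γ : ℝ) (A G : Matrix n n ℝ) : Matrix n n ℝ := (1/γ) • (A⁻¹ - A⁻¹ * G * A⁻¹)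

lemma quadCoeff_self (γ : ℝ) (A : Matrix n n ℝ) : quadCoeff γ A A = 0 := by
  rw [quadCoeff, nonsing_inv_mul_self_mul_nonsing_inv, sub_self, smul_zero]

lemma Matrix.IsHermitian.quadCoeff (hA : A.IsHermitian) (hG : G.IsHermitian) :
    (quadCoeff γ A G).IsHermitian := by
  refine (hA.inv.sub ?_).smul (IsSelfAdjoint.all _)
  have h := isHermitian_mul_mul_conjTranspose A⁻¹ hG
  rwa [hA.inv.eq] at h

lemma smul_mul_quadCoeff (hA : IsUnit A.det) (hγ : γ ≠ 0) :
    γ • (A * quadCoeff γ A G) = 1 - G * A⁻¹ := by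
  rw [quadCoeff, Matrix.mul_smul, smul_smul, mul_one_div_cancel hγ, one_smul, Matrix.mul_sub,
    ← Matrix.mul_assoc, ← Matrix.mul_assoc, mul_nonsing_inv _ hA, Matrix.one_mul]

lemma smul_mulVec_quadCoeff_mulVec (hA : IsUnit A.det) (hγ : γ ≠ 0) (q : n → ℝ) :
    γ • (A *ᵥ (quadCoeff γ A G *ᵥ q)) = q - G *ᵥ (A⁻¹ *ᵥ q) := by
  rw [mulVec_mulVec, ← smul_mulVec, smul_mul_quadCoeff hA hγ, sub_mulVec, one_mulVec,
    mulVec_mulVec]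

lemma trace_mul_sub_vecMulVec_quadCoeff (hA : A.IsHermitian) (hAdet : IsUnit A.det)
    (hγ : γ ≠ 0) (S : Matrix n n ℝ) (q : n → ℝ) :
    trace (A * S * A * (γ • quadCoeff γ A G
        - γ ^ 2 • vecMulVec (quadCoeff γ A G *ᵥ q) (quadCoeff γ A G *ᵥ q)))
      = trace (S * (A - G)) - (q - G *ᵥ A⁻¹ *ᵥ q) ⬝ᵥ S *ᵥ (q - G *ᵥ A⁻¹ *ᵥ q) := by
  have hAB := smul_mul_quadCoeff (G := G) hAdet hγ
  have hlin : trace (A * S * A * (γ • quadCoeff γ A G)) = trace (S * (A - G)) := by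
    rw [Matrix.mul_assoc, trace_mul_cycle, Matrix.mul_smul, hAB,
      Matrix.sub_mul, Matrix.one_mul, Matrix.mul_assoc G, nonsing_inv_mul _ hAdet,
      Matrix.mul_one, trace_mul_comm]
  have hquad : ∀ x : n → ℝ, trace (A * S * A * (γ ^ 2 • vecMulVec x x))
      = (γ • (A *ᵥ x)) ⬝ᵥ S *ᵥ (γ • (A *ᵥ x)) := fun x => by
    rw [Matrix.mul_smul, trace_smul, mul_vecMulVec, trace_vecMulVec, ← mulVec_mulVec,
      ← mulVec_mulVec, dotProduct_comm, hA.dotProduct_mulVec_comm x, dotProduct_comm,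
      mulVec_smul, dotProduct_smul, smul_dotProduct, smul_eq_mul, smul_eq_mul, smul_eq_mul]
    ring
  rw [Matrix.mul_sub, trace_sub, hlin, hquad, smul_mulVec_quadCoeff_mulVec hAdet hγ]

end QuadCoeff

section SpatialDerivatives

variable {d : ℕ} {γ E c r : ℝ} {Bm : Matrix (Fin d) (Fin d) ℝ}

-- The candidate value function is `u(t, V, β) = -expQuad γ e^{r(T-t)} (a t) r (B t) V β`.
def expQuad (γ E c r : ℝ) (Bm : Matrix (Fin d) (Fin d) ℝ) (V : ℝ) (β : Fin d → ℝ) : ℝ :=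
  Real.exp (-γ * (E * V + c + (1/2) * (rsub r β ⬝ᵥ Bm.mulVec (rsub r β))))

lemma hasDerivAt_expQuad_wealth (V : ℝ) (β : Fin d → ℝ) :
    HasDerivAt (fun V => expQuad γ E c r Bm V β) (-(γ * E) * expQuad γ E c r Bm V β) V := by
  have h := ((((hasDerivAt_id V).const_mul E).add_const c).add_const
    ((1/2) * (rsub r β ⬝ᵥ Bm *ᵥ rsub r β))).const_mul (-γ) |>.exp
  refine h.congr_deriv ?_
  simp only [expQuad, id, mul_one]
  ring

lemma hasDerivAt_rsub_update (r : ℝ) (β : Fin d → ℝ) (i : Fin d) :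
    HasDerivAt (fun y => rsub r (Function.update β i y)) (Pi.single i 1) (β i) :=
  (hasDerivAt_update β i (β i)).sub_const fun _ => r

lemma hasDerivAt_expQuad_update (hB : Bm.IsHermitian) (V : ℝ) (β : Fin d → ℝ) (i : Fin d) :
    HasDerivAt (fun y => expQuad γ E c r Bm V (Function.update β i y))
      (-γ * (Bm *ᵥ rsub r β) i * expQuad γ E c r Bm V β) (β i) := by
  have hQ := (hasDerivAt_rsub_update r β i).dotProduct_mulVec_self hB
  have h := (((hQ.const_mul (1/2)).const_add (E * V + c)).const_mul (-γ)).exp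
  convert h using 1
  · simp only [expQuad, add_assoc]
  · simp only [expQuad, Function.update_eq_self, single_one_dotProduct]
    ring

lemma hasDerivAt_mulVec_rsub_update (Bm : Matrix (Fin d) (Fin d) ℝ) (r : ℝ) (β : Fin d → ℝ)
    (i j : Fin d) :
    HasDerivAt (fun y => (Bm *ᵥ rsub r (Function.update β j y)) i) (Bm i j) (β j) := by
  simpa [mulVec_single_one] using hasDerivAt_pi.1 ((hasDerivAt_rsub_update r β j).mulVec Bm) i

variable {u : ℝ → ℝ → (Fin d → ℝ) → ℝ} {t : ℝ}

lemma umV_eq (hu : ∀ V β, u t V β = -expQuad γ E c r Bm V β) (V : ℝ) (β : Fin d → ℝ) :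
    umV u t V β = γ * E * expQuad γ E c r Bm V β := by
  simp only [umV, hu]
  rw [(hasDerivAt_expQuad_wealth V β).fun_neg.deriv]
  ring

lemma umVV_eq (hu : ∀ V β, u t V β = -expQuad γ E c r Bm V β) (V : ℝ) (β : Fin d → ℝ) :
    umVV u t V β = -(γ ^ 2 * E ^ 2 * expQuad γ E c r Bm V β) := by
  simp only [umVV, umV_eq hu]
  rw [((hasDerivAt_expQuad_wealth V β).const_mul (γ * E)).deriv]
  ring

lemma umVb_eq (hu : ∀ V β, u t V β = -expQuad γ E c r Bm V β) (hB : Bm.IsHermitian) (V : ℝ)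
    (β : Fin d → ℝ) :
    umVb u t V β = -(γ ^ 2 * E * expQuad γ E c r Bm V β) • (Bm *ᵥ rsub r β) := by
  funext i
  simp only [umVb, umV_eq hu]
  rw [((hasDerivAt_expQuad_update hB V β i).const_mul (γ * E)).deriv]
  simp only [Pi.smul_apply, smul_eq_mul]
  ring

lemma umgrad_eq (hu : ∀ V β, u t V β = -expQuad γ E c r Bm V β) (hB : Bm.IsHermitian) (V : ℝ)
    (β : Fin d → ℝ) :
    umgrad u t V β = (γ * expQuad γ E c r Bm V β) • (Bm *ᵥ rsub r β) := by
  funext i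
  simp only [umgrad, hu]
  rw [(hasDerivAt_expQuad_update hB V β i).fun_neg.deriv]
  simp only [Pi.smul_apply, smul_eq_mul]
  ring

lemma umhess_eq (hu : ∀ V β, u t V β = -expQuad γ E c r Bm V β) (hB : Bm.IsHermitian) (V : ℝ)
    (β : Fin d → ℝ) :
    umhess u t V β = expQuad γ E c r Bm V β
      • (γ • Bm - γ ^ 2 • vecMulVec (Bm *ᵥ rsub r β) (Bm *ᵥ rsub r β)) := by
  ext i j
  simp only [umhess, of_apply, umgrad_eq hu hB, Matrix.smul_apply, Matrix.sub_apply,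
    vecMulVec_apply, smul_eq_mul]
  simp only [Pi.smul_apply, smul_eq_mul]
  rw [(((hasDerivAt_expQuad_update hB V β j).const_mul γ).fun_mul
    (hasDerivAt_mulVec_rsub_update Bm r β i j)).deriv]
  simp only [Function.update_eq_self]
  ring

lemma hamMd_eq (hu : ∀ V β, u t V β = -expQuad γ E c r Bm V β) (hB : Bm.IsHermitian)
    (Sm Gt : Matrix (Fin d) (Fin d) ℝ) (V : ℝ) (β M : Fin d → ℝ) :
    hamMd Sm Gt r u t V β M
      = γ * E * expQuad γ E c r Bm V β * (r * V)
        + γ * E * expQuad γ E c r Bm V β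
          * (M ⬝ᵥ (rsub r β - γ • (Gt *ᵥ (Bm *ᵥ rsub r β))) - γ * E / 2 * (M ⬝ᵥ Sm *ᵥ M)) := by
  rw [hamMd, umV_eq hu, umVV_eq hu, umVb_eq hu hB, mulVec_smul, dotProduct_smul, dotProduct_sub,
    dotProduct_smul, smul_eq_mul, smul_eq_mul]
  ring

end SpatialDerivatives

section FilterCovariance

variable {n : Type*} [Fintype n] [DecidableEq n] {Sm G0 : Matrix n n ℝ}

lemma isHermitian_inv_add_smul_inv (hG0 : G0.IsHermitian) (hSm : Sm.IsHermitian) (s : ℝ) :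
    (G0⁻¹ + s • Sm⁻¹).IsHermitian :=
  hG0.inv.add (hSm.inv.smul (IsSelfAdjoint.all s))

lemma posDef_inv_add_smul_inv (hG0 : G0.PosDef) (hSm : Sm.PosDef) {s : ℝ} (hs : 0 ≤ s) :
    (G0⁻¹ + s • Sm⁻¹).PosDef :=
  hG0.inv.add_posSemidef (hSm.inv.posSemidef.smul hs)

lemma continuous_inv_add_smul_inv (G0 Sm : Matrix n n ℝ) :
    Continuous fun s : ℝ => G0⁻¹ + s • Sm⁻¹ :=
  continuous_const.add (continuous_id.smul continuous_const)

lemma isOpen_setOf_det_inv_add_smul_inv_ne_zero (G0 Sm : Matrix n n ℝ) :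
    IsOpen {s : ℝ | (G0⁻¹ + s • Sm⁻¹).det ≠ 0} :=
  isOpen_compl_singleton.preimage (continuous_inv_add_smul_inv G0 Sm).matrix_det

lemma det_inv_add_smul_inv_ne_zero (hG0 : G0.PosDef) (hSm : Sm.PosDef) {s : ℝ} (hs : 0 ≤ s) :
    (G0⁻¹ + s • Sm⁻¹).det ≠ 0 :=
  (posDef_inv_add_smul_inv hG0 hSm hs).det_pos.ne'

variable {Γ : ℝ → Matrix n n ℝ} {T t : ℝ}

lemma continuousAt_of_eq_inv_add_smul_inv (hΓ : ∀ s, Γ s = (G0⁻¹ + s • Sm⁻¹)⁻¹) {s : ℝ}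
    (hs : (G0⁻¹ + s • Sm⁻¹).det ≠ 0) : ContinuousAt Γ s := by
  rw [show Γ = fun s => (G0⁻¹ + s • Sm⁻¹)⁻¹ from funext hΓ]
  refine (continuousAt_matrix_inv _ ?_).comp (continuous_inv_add_smul_inv G0 Sm).continuousAt
  rw [Ring.inverse_eq_inv']
  exact continuousAt_inv₀ hs

lemma hasDerivAt_integral_trace (hG0 : G0.PosDef) (hSm : Sm.PosDef)
    (hΓ : ∀ s, Γ s = (G0⁻¹ + s • Sm⁻¹)⁻¹) (ht : 0 ≤ t) (htT : t ≤ T) :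
    HasDerivAt (fun t => ∫ s in t..T, trace (Sm⁻¹ * (Γ s - Γ T)))
      (-trace (Sm⁻¹ * (Γ t - Γ T))) t := by
  set U := {s : ℝ | (G0⁻¹ + s • Sm⁻¹).det ≠ 0}
  have hU : IsOpen U := isOpen_setOf_det_inv_add_smul_inv_ne_zero G0 Sm
  have htrace : Continuous fun X : Matrix n n ℝ => trace (Sm⁻¹ * (X - Γ T)) :=
    (continuous_const.matrix_mul (continuous_id.sub continuous_const)).matrix_trace
  have hf : ContinuousOn (fun s => trace (Sm⁻¹ * (Γ s - Γ T))) U := fun s hs =>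
    (htrace.continuousAt.comp (continuousAt_of_eq_inv_add_smul_inv hΓ hs)).continuousWithinAt
  have hsub : uIcc t T ⊆ U := fun s hs =>
    det_inv_add_smul_inv_ne_zero hG0 hSm (ht.trans (uIcc_of_le htT ▸ hs).1)
  have htU : t ∈ U := det_inv_add_smul_inv_ne_zero hG0 hSm ht
  exact intervalIntegral.integral_hasDerivAt_left ((hf.mono hsub).intervalIntegrable)
    (hf.stronglyMeasurableAtFilter hU t htU) (hf.continuousAt (hU.mem_nhds htU))

lemma hasDerivAt_dotProduct_quadCoeff_mulVec {γ : ℝ} {B : ℝ → Matrix n n ℝ}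
    (hG0 : G0.PosDef) (hSm : Sm.PosDef) (hΓ : ∀ s, Γ s = (G0⁻¹ + s • Sm⁻¹)⁻¹)
    (hB : ∀ s, B s = quadCoeff γ (Γ s) (Γ T)) (ht : 0 ≤ t) (q : n → ℝ) :
    HasDerivAt (fun s => q ⬝ᵥ B s *ᵥ q)
      (1/γ * (q ⬝ᵥ Sm⁻¹ *ᵥ q - 2 * (Sm⁻¹ *ᵥ q ⬝ᵥ Γ T *ᵥ ((Γ t)⁻¹ *ᵥ q)))) t := by
  set P := fun s : ℝ => G0⁻¹ + s • Sm⁻¹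
  have hPherm : ∀ s, (P s).IsHermitian :=
    isHermitian_inv_add_smul_inv hG0.isHermitian hSm.isHermitian
  have hΓinv : ∀ᶠ s in 𝓝 t, (Γ s)⁻¹ = P s := by
    filter_upwards [(isOpen_setOf_det_inv_add_smul_inv_ne_zero G0 Sm).mem_nhds
      (det_inv_add_smul_inv_ne_zero hG0 hSm ht)] with s hs
    rw [hΓ, nonsing_inv_nonsing_inv _ (isUnit_iff_ne_zero.2 hs)]
  have hPq : HasDerivAt (fun s => P s *ᵥ q) (Sm⁻¹ *ᵥ q) t := by
    simpa [P, add_mulVec, smul_mulVec] using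
      ((hasDerivAt_id t).smul_const (Sm⁻¹ *ᵥ q)).const_add (G0⁻¹ *ᵥ q)
  have hΓT : (Γ T).IsHermitian := hΓ T ▸ (hPherm T).inv
  have hquad : (fun s => q ⬝ᵥ B s *ᵥ q)
      =ᶠ[𝓝 t] fun s => 1/γ * (q ⬝ᵥ P s *ᵥ q - P s *ᵥ q ⬝ᵥ Γ T *ᵥ (P s *ᵥ q)) := by
    filter_upwards [hΓinv] with s hs
    rw [hB s, quadCoeff, hs, smul_mulVec, dotProduct_smul, sub_mulVec, dotProduct_sub,
      ← mulVec_mulVec, ← mulVec_mulVec, (hPherm s).dotProduct_mulVec_comm q (Γ T *ᵥ (P s *ᵥ q)),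
      dotProduct_comm (Γ T *ᵥ _), smul_eq_mul]
  rw [show (Γ t)⁻¹ = P t from hΓinv.self_of_nhds]
  have h := (((hasDerivAt_const t q).dotProduct hPq).sub
    (hPq.dotProduct_mulVec_self hΓT)).const_mul (1/γ)
  refine (h.congr_of_eventuallyEq hquad).congr_deriv ?_
  simp

end FilterCovariance

lemma umt_eq {d : ℕ} {u : ℝ → ℝ → (Fin d → ℝ) → ℝ} {a : ℝ → ℝ}
    {B : ℝ → Matrix (Fin d) (Fin d) ℝ} {T r γ t a' b' V : ℝ} {β : Fin d → ℝ}
    (hu : ∀ (t V : ℝ) (β : Fin d → ℝ),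
      u t V β = -Real.exp (-γ * (Real.exp (r*(T-t)) * V + a t
        + (1/2) * (rsub r β ⬝ᵥ (B t).mulVec (rsub r β)))))
    (ha : HasDerivAt a a' t) (hq : HasDerivAt (fun s => rsub r β ⬝ᵥ B s *ᵥ rsub r β) b' t) :
    umt u t V β = γ * expQuad γ (Real.exp (r*(T-t))) (a t) r (B t) V β
      * (-(r * Real.exp (r*(T-t)) * V) + a' + b' / 2) := by
  have hE : HasDerivAt (fun s => Real.exp (r*(T-s))) (Real.exp (r*(T-t)) * (r * -1)) t :=
    (((hasDerivAt_id t).const_sub T).const_mul r).exp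
  simp only [umt, hu]
  have h := ((((hE.mul_const V).fun_add ha).fun_add (hq.const_mul (1/2))).const_mul (-γ)).exp
  rw [h.fun_neg.deriv, expQuad]
  ring

theorem stmt15_general
    (T r γ : ℝ) (hγ : 0 < γ)
    (d : ℕ)
    (Sm G0 : Matrix (Fin d) (Fin d) ℝ) (hSm : Sm.PosDef) (hG0 : G0.PosDef)
    (Γ : ℝ → Matrix (Fin d) (Fin d) ℝ)
    (hΓ : ∀ t, Γ t = (G0⁻¹ + t • Sm⁻¹)⁻¹)
    (a : ℝ → ℝ) (B : ℝ → Matrix (Fin d) (Fin d) ℝ)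
    (ha : ∀ t, a t = (1/(2*γ)) * ∫ s in t..T, Matrix.trace (Sm⁻¹ * (Γ s - Γ T)))
    (hB : ∀ t, B t = (1/γ) • ((Γ t)⁻¹ - (Γ t)⁻¹ * Γ T * (Γ t)⁻¹))
    (u : ℝ → ℝ → (Fin d → ℝ) → ℝ)
    (hu : ∀ (t V : ℝ) (β : Fin d → ℝ),
      u t V β = -Real.exp (-γ * (Real.exp (r*(T-t)) * V + a t
        + (1/2) * (rsub r β ⬝ᵥ (B t).mulVec (rsub r β))))) :
    (∀ t ∈ Icc (0:ℝ) T, ∀ (V : ℝ) (β : Fin d → ℝ),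
      -- the supremum in the HJB equation is attained at M*
      IsGreatest (Set.range (hamMd Sm (Γ t) r u t V β))
        (hamMd Sm (Γ t) r u t V β
          (Real.exp (-(r*(T-t)))
            • ((1/γ) • (Sm⁻¹ * Γ T * (Γ t)⁻¹).mulVec (rsub r β))))
      ∧
      -- the HJB equation holds
      -umt u t V β - (1/2) * Matrix.trace (Γ t * Sm⁻¹ * Γ t * umhess u t V β)
        - hamMd Sm (Γ t) r u t V β
            (Real.exp (-(r*(T-t)))
              • ((1/γ) • (Sm⁻¹ * Γ T * (Γ t)⁻¹).mulVec (rsub r β))) = 0)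
    ∧
    -- terminal condition for u
    (∀ (V : ℝ) (β : Fin d → ℝ), u T V β = -Real.exp (-γ * V)) := by
  have hΓherm : ∀ s, (Γ s).IsHermitian := fun s =>
    hΓ s ▸ (isHermitian_inv_add_smul_inv hG0.isHermitian hSm.isHermitian s).inv
  have hB' : ∀ s, B s = quadCoeff γ (Γ s) (Γ T) := hB
  have hBherm : ∀ s, (B s).IsHermitian := fun s => hB' s ▸ (hΓherm s).quadCoeff (hΓherm T)
  refine ⟨fun t ⟨ht, htT⟩ V β => ?_, fun V β => ?_⟩
  · set E := Real.exp (r * (T - t)) with hE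
    set q := rsub r β
    set w := Γ T *ᵥ ((Γ t)⁻¹ *ᵥ q) with hwdef
    have hut : ∀ V β, u t V β = -expQuad γ E (a t) r (B t) V β := hu t
    have hΓdet : IsUnit (Γ t).det := by
      rw [hΓ t]
      exact isUnit_iff_ne_zero.2 (posDef_inv_add_smul_inv hG0 hSm ht).inv.det_pos.ne'
    have hMs : Real.exp (-(r*(T-t))) • ((1/γ) • (Sm⁻¹ * Γ T * (Γ t)⁻¹) *ᵥ q)
        = (γ * E)⁻¹ • Sm⁻¹ *ᵥ w := by
      rw [smul_smul, Real.exp_neg, mul_inv, mul_comm, one_div, ← mulVec_mulVec, ← mulVec_mulVec]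
    have hham : ∀ M, hamMd Sm (Γ t) r u t V β M
        = γ * E * expQuad γ E (a t) r (B t) V β * (r * V)
          + γ * E * expQuad γ E (a t) r (B t) V β
            * (M ⬝ᵥ w - γ * E / 2 * (M ⬝ᵥ Sm *ᵥ M)) := fun M => by
      rw [hamMd_eq hut (hBherm t), hB' t, smul_mulVec_quadCoeff_mulVec hΓdet hγ.ne',
        sub_sub_cancel]
    rw [hMs]
    refine ⟨⟨mem_range_self _, forall_mem_range.2 fun M => ?_⟩, ?_⟩
    · rw [hham, hham]
      have hK : 0 < expQuad γ E (a t) r (B t) V β := Real.exp_pos _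
      gcongr _ + _ * ?_
      exact hSm.dotProduct_sub_half_quadratic_le w M (by positivity)
    · have ha' : HasDerivAt a (1/(2*γ) * -trace (Sm⁻¹ * (Γ t - Γ T))) t := by
        rw [show a = _ from funext ha]
        exact (hasDerivAt_integral_trace hG0 hSm hΓ ht htT).const_mul _
      rw [umt_eq hu ha' (hasDerivAt_dotProduct_quadCoeff_mulVec hG0 hSm hΓ hB' ht q), ← hE,
        ← hwdef, umhess_eq hut (hBherm t), Matrix.mul_smul, trace_smul, smul_eq_mul, hham,
        dotProduct_sub_half_quadratic_eq (isUnit_iff_ne_zero.2 hSm.det_pos.ne') w (by positivity),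
        hB' t, trace_mul_sub_vecMulVec_quadCoeff (hΓherm t) hΓdet hγ.ne',
        hSm.isHermitian.inv.sub_dotProduct_mulVec_sub]
      have hE0 : E ≠ 0 := (Real.exp_pos _).ne'
      field_simp
      ring
  · rw [hu, ha, intervalIntegral.integral_same, hB', quadCoeff_self]
    simp

theorem stmt15
    (T r γ : ℝ) (hT : 0 < T) (hγ : 0 < γ)
    (d : ℕ) (hd : 1 ≤ d)
    (Sm G0 : Matrix (Fin d) (Fin d) ℝ) (hSm : Sm.PosDef) (hG0 : G0.PosDef)
    (Γ : ℝ → Matrix (Fin d) (Fin d) ℝ)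
    (hΓ : ∀ t, Γ t = (G0⁻¹ + t • Sm⁻¹)⁻¹)
    (a : ℝ → ℝ) (B : ℝ → Matrix (Fin d) (Fin d) ℝ)
    (ha : ∀ t, a t = (1/(2*γ)) * ∫ s in t..T, Matrix.trace (Sm⁻¹ * (Γ s - Γ T)))
    (hB : ∀ t, B t = (1/γ) • ((Γ t)⁻¹ - (Γ t)⁻¹ * Γ T * (Γ t)⁻¹))
    (u : ℝ → ℝ → (Fin d → ℝ) → ℝ)
    (hu : ∀ (t V : ℝ) (β : Fin d → ℝ),
      u t V β = -Real.exp (-γ * (Real.exp (r*(T-t)) * V + a t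
        + (1/2) * (rsub r β ⬝ᵥ (B t).mulVec (rsub r β))))) :
    (∀ t ∈ Icc (0:ℝ) T, ∀ (V : ℝ) (β : Fin d → ℝ),
      -- the supremum in the HJB equation is attained at M*
      IsGreatest (Set.range (hamMd Sm (Γ t) r u t V β))
        (hamMd Sm (Γ t) r u t V β
          (Real.exp (-(r*(T-t)))
            • ((1/γ) • (Sm⁻¹ * Γ T * (Γ t)⁻¹).mulVec (rsub r β))))
      ∧
      -- the HJB equation holds
      -umt u t V β - (1/2) * Matrix.trace (Γ t * Sm⁻¹ * Γ t * umhess u t V β)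
        - hamMd Sm (Γ t) r u t V β
            (Real.exp (-(r*(T-t)))
              • ((1/γ) • (Sm⁻¹ * Γ T * (Γ t)⁻¹).mulVec (rsub r β))) = 0)
    ∧
    -- terminal condition for u
    (∀ (V : ℝ) (β : Fin d → ℝ), u T V β = -Real.exp (-γ * V)) :=
  stmt15_general T r γ hγ d Sm G0 hSm hG0 Γ hΓ a B ha hB u hu

end
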